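/- Let W be a real vector space and let (D, θ) be symplectically flat, with D : E →ₗ End_ℝ(W) and θ ∈ End_ℝ(W). Define d⁰ : W → (E →ₗ W) × W by d⁰(v) := ((X ↦ D(X)v), θv), and define d¹ : (E →ₗ W) × W → (bilinear maps E × E → W) × (E →ₗ W) by d¹(φ, η) := ((X,Y) ↦ D(X)(φ(Y)) − D(Y)(φ(X)) − 2ω(X,Y)·η, X ↦ D(X)η − θ(φ(X))). Then d¹ ∘ d⁰ = 0, and for every (φ, η) the first component of d¹(φ, η) is an alternating bilinear map. -/
import Mathlib


open Finset

/-- The standard symplectic form on `E = ℝ^{2n}`: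
`ω(x,y) = ∑_{i=1}^{n} (x_i y_{n+i} − x_{n+i} y_i)`. -/
def stdSymp (n : ℕ) (x y : Fin (2 * n) → ℝ) : ℝ :=
  ∑ i : Fin n, (x ⟨i.1, by have := i.isLt; omega⟩ * y ⟨i.1 + n, by have := i.isLt; omega⟩
    - x ⟨i.1 + n, by have := i.isLt; omega⟩ * y ⟨i.1, by have := i.isLt; omega⟩)

/-- A pair `(D, θ)`, with `D : E →ₗ End_ℝ(W)` linear and `θ ∈ End_ℝ(W)`, is
symplectically flat if `D(X)∘D(Y) − D(Y)∘D(X) = 2ω(X,Y)·θ` and `D(X)∘θ = θ∘D(X)`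
for all `X, Y ∈ E`. -/
def SymplecticallyFlat (n : ℕ) {W : Type*} [AddCommGroup W] [Module ℝ W]
    (D : (Fin (2 * n) → ℝ) →ₗ[ℝ] Module.End ℝ W) (θ : Module.End ℝ W) : Prop :=
  ∀ X Y : Fin (2 * n) → ℝ,
    D X * D Y - D Y * D X = (2 * stdSymp n X Y) • θ ∧ D X * θ = θ * D X
/-- for symplectically flat `(D, θ)`, with
`d⁰(v) := ((X ↦ D(X)v), θv)` and
`d¹(φ, η) := ((X,Y) ↦ D(X)(φ(Y)) − D(Y)(φ(X)) − 2ω(X,Y)·η, X ↦ D(X)η − θ(φ(X)))`,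
we have `d¹ ∘ d⁰ = 0`, and the first component of `d¹(φ, η)` is alternating. -/
theorem stmt5 (n : ℕ) (hn : 1 ≤ n) (W : Type*) [AddCommGroup W] [Module ℝ W]
    (D : (Fin (2 * n) → ℝ) →ₗ[ℝ] Module.End ℝ W) (θ : Module.End ℝ W)
    (hflat : SymplecticallyFlat n D θ) :
    -- d¹ ∘ d⁰ = 0 : both components of d¹ (d⁰ v) vanish
    (∀ v : W, ∀ X Y : Fin (2 * n) → ℝ,
        D X (D Y v) - D Y (D X v) - (2 * stdSymp n X Y) • (θ v) = 0) ∧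
    (∀ v : W, ∀ X : Fin (2 * n) → ℝ, D X (θ v) - θ (D X v) = 0) ∧
    -- the first component of d¹(φ, η) is an alternating bilinear map
    (∀ (φ : (Fin (2 * n) → ℝ) →ₗ[ℝ] W) (η : W) (X Y : Fin (2 * n) → ℝ),
        D X (φ Y) - D Y (φ X) - (2 * stdSymp n X Y) • η
          = -(D Y (φ X) - D X (φ Y) - (2 * stdSymp n Y X) • η)) ∧
    (∀ (φ : (Fin (2 * n) → ℝ) →ₗ[ℝ] W) (η : W) (X : Fin (2 * n) → ℝ),
        D X (φ X) - D X (φ X) - (2 * stdSymp n X X) • η = 0) := by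
  have hanti : ∀ X Y, stdSymp n X Y = - stdSymp n Y X := by
    intro X Y
    simp only [stdSymp, ← Finset.sum_neg_distrib]
    exact Finset.sum_congr rfl fun i _ => by ring
  have hself : ∀ X, stdSymp n X X = 0 := by
    intro X
    have := hanti X X
    linarith
  refine ⟨?_, ?_, ?_, ?_⟩
  · intro v X Y
    have h := (hflat X Y).1
    have := congrArg (fun f : Module.End ℝ W => f v) h
    simp [Module.End.mul_apply, LinearMap.smul_apply] at this
    rw [sub_eq_zero]
    exact this
  · intro v X
    have h := (hflat X X).2
    have := congrArg (fun f : Module.End ℝ W => f v) h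
    simp [Module.End.mul_apply] at this
    rw [sub_eq_zero]
    exact this
  · intro φ η X Y
    rw [hanti X Y]
    module
  · intro φ η X
    rw [hself]
    simp
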